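/- arXiv:2304.04860 — 4 statements merged into one kernel-verified Lean document; each statement's English description precedes it below -/
import Mathlib

section
/- Let H be a real inner product space, Ω ⊆ H a closed subspace with orthogonal projection P_Ω, and let u ∈ Ω, d ∈ H, ρ⁻ > 0, ρ⁺ > 0, and γ > 0 with γρ⁺ ≤ 2. Suppose ⟨d, u⟩ ≥ ρ⁻‖u‖² and ‖P_Ω(d)‖² ≤ ρ⁺⟨d, u⟩. Then ‖u − γP_Ω(d)‖² ≤ (1 − (2 − γρ⁺)γρ⁻)‖u‖². -/
open scoped RealInnerProductSpace

/-- Key contraction estimate of Theorem 4.2: if `u ∈ Ω`, `⟨d, u⟩ ≥ ρ⁻‖u‖²` and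
`‖P_Ω d‖² ≤ ρ⁺⟨d, u⟩` with `γρ⁺ ≤ 2`, then
`‖u − γ P_Ω d‖² ≤ (1 − (2 − γρ⁺)γρ⁻)‖u‖²`. -/
theorem stmt4 {H : Type*} [NormedAddCommGroup H] [InnerProductSpace ℝ H]
    (Ω : Submodule ℝ H) [Ω.HasOrthogonalProjection]
    (u d : H) (hu : u ∈ Ω) (ρm ρp γ : ℝ) (hρm : 0 < ρm) (hρp : 0 < ρp) (hγ : 0 < γ)
    (hγρp : γ * ρp ≤ 2)
    (h1 : ρm * ‖u‖ ^ 2 ≤ ⟪d, u⟫)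
    (h2 : ‖(Ω.orthogonalProjectionOnto d : H)‖ ^ 2 ≤ ρp * ⟪d, u⟫) :
    ‖u - γ • (Ω.orthogonalProjectionOnto d : H)‖ ^ 2 ≤ (1 - (2 - γ * ρp) * (γ * ρm)) * ‖u‖ ^ 2 := by
  set p : H := (Ω.orthogonalProjectionOnto d : H) with hp
  have hpu : ⟪p, u⟫ = ⟪d, u⟫ := by
    rw [hp, ← Submodule.starProjection_apply, Submodule.inner_starProjection_left_eq_right]
    rw [Submodule.starProjection_eq_self_iff.2 hu]
  have hexp : ‖u - γ • p‖ ^ 2 = ‖u‖ ^ 2 - 2 * γ * ⟪d, u⟫ + γ ^ 2 * ‖p‖ ^ 2 := by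
    rw [← real_inner_self_eq_norm_sq]
    simp only [inner_sub_sub_self, inner_smul_left, inner_smul_right, real_inner_smul_left,
      real_inner_self_eq_norm_sq]
    rw [real_inner_comm u p] at *
    rw [hpu]
    simp only [starRingEnd_apply, star_trivial]
    ring
  have hdu : 0 ≤ ⟪d, u⟫ := le_trans (by positivity) h1
  have hstep : γ ^ 2 * ‖p‖ ^ 2 ≤ γ ^ 2 * (ρp * ⟪d, u⟫) := by
    apply mul_le_mul_of_nonneg_left h2 (by positivity)
  have hcoef : 0 ≤ γ * (2 - γ * ρp) := by nlinarith
  have hfin : (γ * (2 - γ * ρp)) * (ρm * ‖u‖ ^ 2) ≤ (γ * (2 - γ * ρp)) * ⟪d, u⟫ :=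
    mul_le_mul_of_nonneg_left h1 hcoef
  nlinarith [hexp, hstep, hfin]
end

section
/- Let f : ℝ^{n1×n2×n3} → ℝ be differentiable, let X*, X ∈ T_r, let γ > 0, and let X⁺ ∈ T_r be a best tubal-rank-r approximation of Z = X − γ∇f(X), i.e. ‖X⁺ − Z‖ ≤ ‖W − Z‖ for every W ∈ T_r. Let Ω be the linear span of {X*, X, X⁺} and P_Ω the orthogonal projection onto Ω. Assume there are ρ⁻ > 0 and ρ⁺ > 0 with γρ⁺ ≤ 2 such that ⟨∇f(X) − ∇f(X*), X − X*⟩ ≥ ρ⁻‖X − X*‖² and ‖P_Ω(∇f(X) − ∇f(X*))‖² ≤ ρ⁺⟨∇f(X) − ∇f(X*), X − X*⟩. Then ‖X⁺ − X*‖ ≤ 2√(1 − (2 − γρ⁺)γρ⁻)·‖X − X*‖ + 2γ‖P_Ω(∇f(X*))‖. -/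
open scoped RealInnerProductSpace

noncomputable section

/-- Third-order tensors with the Frobenius (Euclidean) inner product structure. -/
abbrev Tensor (n1 n2 n3 : ℕ) : Type := EuclideanSpace ℝ (Fin n1 × Fin n2 × Fin n3)

/-- `unfold X` stacks the frontal slices of `X` vertically: row index `(k, i)`, column `j`. -/
def unfold {n1 n2 n3 : ℕ} (X : Tensor n1 n2 n3) : Matrix (Fin n3 × Fin n1) (Fin n2) ℝ :=
  fun ki j => X (ki.2, j, ki.1)

/-- Block-circulant matrix of a tensor: block `(p, q)` is the frontal slice `(p - q) mod n3`. -/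
def bcirc {n1 n2 n3 : ℕ} (X : Tensor n1 n2 n3) :
    Matrix (Fin n3 × Fin n1) (Fin n3 × Fin n2) ℝ :=
  fun pi qj => X (pi.2, qj.2, pi.1 - qj.1)

/-- The t-product `A * B`, characterized by `unfold (A*B) = bcirc A * unfold B`. -/
def tProd {n1 n2 n4 n3 : ℕ} (A : Tensor n1 n2 n3) (B : Tensor n2 n4 n3) : Tensor n1 n4 n3 :=
  WithLp.toLp 2 (fun ijl => (bcirc A * unfold B) (ijl.2.2, ijl.1) ijl.2.1)

/-- `Tset n1 n2 n3 r` is the set `T_r` of tensors of tubal rank at most `r`. -/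
def Tset (n1 n2 n3 r : ℕ) : Set (Tensor n1 n2 n3) :=
  {X | ∃ (X1 : Tensor n1 r n3) (X2 : Tensor r n2 n3), X = tProd X1 X2}

private lemma quad_bound (γ ρm ρp nA nd nP s : ℝ) (hγ : 0 < γ) (h2 : γ * ρp ≤ 2)
    (hconv : ρm * nd ^ 2 ≤ s) (hcoco : nP ^ 2 ≤ ρp * s)
    (e1 : nA ^ 2 = nd ^ 2 - 2 * γ * s + γ ^ 2 * nP ^ 2) :
    nA ^ 2 ≤ (1 - (2 - γ * ρp) * (γ * ρm)) * nd ^ 2 := by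
  have h2' : 0 ≤ 2 - γ * ρp := by linarith
  nlinarith [mul_le_mul_of_nonneg_left hcoco (sq_nonneg γ),
    mul_le_mul_of_nonneg_left hconv (mul_nonneg hγ.le h2')]

set_option maxHeartbeats 1000000 in
/-- Per-iteration estimate of Theorem 4.2 for one ISTHT step. -/
theorem stmt5 {n1 n2 n3 r : ℕ} (f : Tensor n1 n2 n3 → ℝ) (hf : Differentiable ℝ f)
    (Xstar X Xplus : Tensor n1 n2 n3)
    (hXstar : Xstar ∈ Tset n1 n2 n3 r) (hX : X ∈ Tset n1 n2 n3 r)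
    (hXplus : Xplus ∈ Tset n1 n2 n3 r)
    (γ : ℝ) (hγ : 0 < γ)
    (hbest : ∀ W ∈ Tset n1 n2 n3 r,
      ‖Xplus - (X - γ • gradient f X)‖ ≤ ‖W - (X - γ • gradient f X)‖)
    (ρm ρp : ℝ) (hρm : 0 < ρm) (hρp : 0 < ρp) (hγρp : γ * ρp ≤ 2)
    (hconv : ρm * ‖X - Xstar‖ ^ 2 ≤ ⟪gradient f X - gradient f Xstar, X - Xstar⟫)
    (hcoco :
      ‖(Submodule.orthogonalProjectionOnto (Submodule.span ℝ {Xstar, X, Xplus})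
          (gradient f X - gradient f Xstar) : Tensor n1 n2 n3)‖ ^ 2
        ≤ ρp * ⟪gradient f X - gradient f Xstar, X - Xstar⟫) :
    ‖Xplus - Xstar‖ ≤ 2 * Real.sqrt (1 - (2 - γ * ρp) * (γ * ρm)) * ‖X - Xstar‖
      + 2 * γ * ‖(Submodule.orthogonalProjectionOnto (Submodule.span ℝ {Xstar, X, Xplus})
          (gradient f Xstar) : Tensor n1 n2 n3)‖ := by
  classical
  set K := Submodule.span ℝ ({Xstar, X, Xplus} : Set (Tensor n1 n2 n3)) with hKdef
  set Z := X - γ • gradient f X with hZdef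
  set G := gradient f X - gradient f Xstar with hGdef
  set d := X - Xstar with hddef
  have hXsK : Xstar ∈ K := Submodule.subset_span (by simp)
  have hXK : X ∈ K := Submodule.subset_span (by simp)
  have hXpK : Xplus ∈ K := Submodule.subset_span (by simp)
  have hdK : d ∈ K := Submodule.sub_mem K hXK hXsK
  have hs0 : 0 ≤ ⟪G, d⟫ := le_trans (by positivity) hconv
  -- Pythagoras
  have pyth : ∀ w ∈ K, ‖w - Z‖ ^ 2
      = ‖w - (K.orthogonalProjectionOnto Z : Tensor n1 n2 n3)‖ ^ 2
        + ‖(K.orthogonalProjectionOnto Z : Tensor n1 n2 n3) - Z‖ ^ 2 := by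
    intro w hw
    have h1 : (K.orthogonalProjectionOnto Z : Tensor n1 n2 n3) - Z ∈ Kᗮ := by
      have := K.sub_starProjection_mem_orthogonal Z
      rw [Submodule.starProjection_apply] at this
      simpa [neg_sub] using Kᗮ.neg_mem this
    have h2 : w - (K.orthogonalProjectionOnto Z : Tensor n1 n2 n3) ∈ K :=
      Submodule.sub_mem K hw (Submodule.coe_mem _)
    have horth : ⟪w - (K.orthogonalProjectionOnto Z : Tensor n1 n2 n3),
        (K.orthogonalProjectionOnto Z : Tensor n1 n2 n3) - Z⟫ = 0 :=
      (Submodule.mem_orthogonal K _).mp h1 _ h2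
    have hsplit : w - Z = (w - (K.orthogonalProjectionOnto Z : Tensor n1 n2 n3))
        + ((K.orthogonalProjectionOnto Z : Tensor n1 n2 n3) - Z) := by abel
    rw [hsplit, norm_add_sq_real, horth]
    ring
  have hPZ1 : ‖Xplus - (K.orthogonalProjectionOnto Z : Tensor n1 n2 n3)‖
      ≤ ‖Xstar - (K.orthogonalProjectionOnto Z : Tensor n1 n2 n3)‖ := by
    have h1 := hbest Xstar hXstar
    have h2 := pyth Xplus hXpK
    have h3 := pyth Xstar hXsK
    have h4 : ‖Xplus - Z‖ ^ 2 ≤ ‖Xstar - Z‖ ^ 2 := by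
      have := norm_nonneg (Xplus - Z)
      nlinarith [norm_nonneg (Xstar - Z)]
    nlinarith [norm_nonneg (Xplus - (K.orthogonalProjectionOnto Z : Tensor n1 n2 n3)),
      norm_nonneg (Xstar - (K.orthogonalProjectionOnto Z : Tensor n1 n2 n3))]
  -- compute the projection of Z
  have hPZ : (K.orthogonalProjectionOnto Z : Tensor n1 n2 n3)
      = X - γ • (K.orthogonalProjectionOnto G : Tensor n1 n2 n3)
          - γ • (K.orthogonalProjectionOnto (gradient f Xstar) : Tensor n1 n2 n3) := by
    have hgrad : gradient f X = G + gradient f Xstar := by simp [hGdef]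
    have : Z = X - γ • (G + gradient f Xstar) := by rw [hZdef, hgrad]
    rw [this]
    have := K.starProjection_eq_self_iff.mpr hXK
    rw [Submodule.starProjection_apply] at this
    push_cast [map_sub, map_smul, map_add]
    rw [this]
    module
  have hdecomp : Xstar - (K.orthogonalProjectionOnto Z : Tensor n1 n2 n3)
      = -(d - γ • (K.orthogonalProjectionOnto G : Tensor n1 n2 n3))
        + γ • (K.orthogonalProjectionOnto (gradient f Xstar) : Tensor n1 n2 n3) := by
    rw [hPZ, hddef]; abel
  -- inner product identity
  have hinner : ⟪d, (K.orthogonalProjectionOnto G : Tensor n1 n2 n3)⟫ = ⟪G, d⟫ := by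
    have h1 := Submodule.inner_orthogonalProjectionOnto_eq_of_mem_left (K := K) ⟨d, hdK⟩ G
    simpa only [Submodule.coe_inner, Submodule.coe_mk, real_inner_comm G d] using h1
  -- key quadratic bound
  have hq : ‖d - γ • (K.orthogonalProjectionOnto G : Tensor n1 n2 n3)‖ ^ 2
      ≤ (1 - (2 - γ * ρp) * (γ * ρm)) * ‖d‖ ^ 2 := by
    have e1 : ‖d - γ • (K.orthogonalProjectionOnto G : Tensor n1 n2 n3)‖ ^ 2
        = ‖d‖ ^ 2 - 2 * γ * ⟪G, d⟫
          + γ ^ 2 * ‖(K.orthogonalProjectionOnto G : Tensor n1 n2 n3)‖ ^ 2 := by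
      rw [norm_sub_sq_real, inner_smul_right, hinner, norm_smul, Real.norm_eq_abs,
        abs_of_pos hγ]
      ring
    exact quad_bound γ ρm ρp _ _ _ _ hγ hγρp hconv hcoco e1
  have hq' : ‖d - γ • (K.orthogonalProjectionOnto G : Tensor n1 n2 n3)‖
      ≤ Real.sqrt (1 - (2 - γ * ρp) * (γ * ρm)) * ‖d‖ := by
    have := Real.sqrt_le_sqrt hq
    rw [Real.sqrt_sq (norm_nonneg _)] at this
    calc ‖d - γ • (K.orthogonalProjectionOnto G : Tensor n1 n2 n3)‖
        ≤ Real.sqrt ((1 - (2 - γ * ρp) * (γ * ρm)) * ‖d‖ ^ 2) := this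
      _ = Real.sqrt (1 - (2 - γ * ρp) * (γ * ρm)) * ‖d‖ := by
          rw [Real.sqrt_mul' _ (sq_nonneg _), Real.sqrt_sq (norm_nonneg _)]
  have hPZ2 : ‖Xstar - (K.orthogonalProjectionOnto Z : Tensor n1 n2 n3)‖
      ≤ Real.sqrt (1 - (2 - γ * ρp) * (γ * ρm)) * ‖d‖
        + γ * ‖(K.orthogonalProjectionOnto (gradient f Xstar) : Tensor n1 n2 n3)‖ := by
    rw [hdecomp]
    calc ‖_ + _‖ ≤ ‖-(d - γ • (K.orthogonalProjectionOnto G : Tensor n1 n2 n3))‖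
          + ‖γ • (K.orthogonalProjectionOnto (gradient f Xstar) : Tensor n1 n2 n3)‖ :=
        norm_add_le _ _
      _ = ‖d - γ • (K.orthogonalProjectionOnto G : Tensor n1 n2 n3)‖
          + γ * ‖(K.orthogonalProjectionOnto (gradient f Xstar) : Tensor n1 n2 n3)‖ := by
          rw [norm_neg, norm_smul]; simp [abs_of_pos hγ]
      _ ≤ _ := by linarith
  have htri : ‖Xplus - Xstar‖
      ≤ ‖Xplus - (K.orthogonalProjectionOnto Z : Tensor n1 n2 n3)‖
        + ‖Xstar - (K.orthogonalProjectionOnto Z : Tensor n1 n2 n3)‖ := by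
    have := norm_sub_le_norm_sub_add_norm_sub Xplus
      ((K.orthogonalProjectionOnto Z : Tensor n1 n2 n3)) Xstar
    simpa [norm_sub_rev] using norm_sub_le_norm_sub_add_norm_sub Xplus
      ((K.orthogonalProjectionOnto Z : Tensor n1 n2 n3)) Xstar
  have : ‖Xplus - Xstar‖ ≤ 2 * ‖Xstar - (K.orthogonalProjectionOnto Z : Tensor n1 n2 n3)‖ := by
    linarith
  calc ‖Xplus - Xstar‖ ≤ 2 * ‖Xstar - (K.orthogonalProjectionOnto Z : Tensor n1 n2 n3)‖ := this
    _ ≤ 2 * (Real.sqrt (1 - (2 - γ * ρp) * (γ * ρm)) * ‖d‖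
        + γ * ‖(K.orthogonalProjectionOnto (gradient f Xstar) : Tensor n1 n2 n3)‖) := by linarith
    _ = 2 * Real.sqrt (1 - (2 - γ * ρp) * (γ * ρm)) * ‖X - Xstar‖
        + 2 * γ * ‖(K.orthogonalProjectionOnto (gradient f Xstar) : Tensor n1 n2 n3)‖ := by
        rw [hddef]; ring

end
end

section
/- Let H be a real inner product space, Ω ⊆ H a closed subspace with orthogonal projection P_Ω, and x, y ∈ Ω. Let f_1, …, f_M : H → ℝ be differentiable, F = (1/M)Σ_{i=1}^M f_i, and let p(1), …, p(M) > 0 with Σ_i p(i) = 1. Assume: (i) for each i, ‖P_Ω(∇f_i(x) − ∇f_i(y))‖² ≤ ρ⁺(i)·⟨∇f_i(x) − ∇f_i(y), x − y⟩ with ρ⁺(i) > 0; (ii) ⟨∇F(x) − ∇F(y), x − y⟩ ≥ ρ⁻‖x − y‖² with ρ⁻ > 0. Set α := max_i ρ⁺(i)/(M·p(i)) and let γ > 0 satisfy γα ≤ 2. Then Σ_{i=1}^M p(i)·‖(x − y) − (γ/(M·p(i)))·P_Ω(∇f_i(x) − ∇f_i(y))‖ ≤ √(1 − (2 − γα)γρ⁻)·‖x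 − y‖. -/
open scoped RealInnerProductSpace

/-- Expected contraction estimate in the proof of Theorem 4.5 (StoISTHT), with the
expectation over the random index `i ∼ p` written as a finite weighted sum. -/
theorem stmt7 {H : Type*} [NormedAddCommGroup H] [InnerProductSpace ℝ H] [CompleteSpace H]
    {M : ℕ} [NeZero M]
    (Ω : Submodule ℝ H) [Submodule.HasOrthogonalProjection Ω]
    (x y : H) (hx : x ∈ Ω) (hy : y ∈ Ω)
    (f : Fin M → H → ℝ) (hf : ∀ i, Differentiable ℝ (f i))
    (F : H → ℝ) (hF : ∀ z, F z = (1 / (M : ℝ)) * ∑ i, f i z)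
    (p : Fin M → ℝ) (hp : ∀ i, 0 < p i) (hpsum : ∑ i, p i = 1)
    (ρp : Fin M → ℝ) (hρp : ∀ i, 0 < ρp i)
    (hcoco : ∀ i, ‖(Submodule.orthogonalProjectionOnto Ω (gradient (f i) x - gradient (f i) y) : H)‖ ^ 2
      ≤ ρp i * ⟪gradient (f i) x - gradient (f i) y, x - y⟫)
    (ρm : ℝ) (hρm : 0 < ρm)
    (hconv : ρm * ‖x - y‖ ^ 2 ≤ ⟪gradient F x - gradient F y, x - y⟫)
    (α : ℝ) (hα : α = ⨆ i, ρp i / (M * p i))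
    (γ : ℝ) (hγ : 0 < γ) (hγα : γ * α ≤ 2) :
    ∑ i, p i * ‖(x - y) - (γ / (M * p i)) •
        (Submodule.orthogonalProjectionOnto Ω (gradient (f i) x - gradient (f i) y) : H)‖
      ≤ Real.sqrt (1 - (2 - γ * α) * (γ * ρm)) * ‖x - y‖ := by
  have hM : (0 : ℝ) < M := Nat.cast_pos.mpr (Nat.pos_of_ne_zero (NeZero.ne M))
  set u : H := x - y with hu
  set d : Fin M → H := fun i => gradient (f i) x - gradient (f i) y with hd
  set v : Fin M → H := fun i => (Submodule.orthogonalProjectionOnto Ω (d i) : H) with hv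
  set c : Fin M → ℝ := fun i => γ / (M * p i) with hc
  have hu_mem : u ∈ Ω := Submodule.sub_mem Ω hx hy
  -- projection is self-adjoint and fixes u
  have hvu : ∀ i, ⟪v i, u⟫ = ⟪d i, u⟫ := by
    intro i
    have := Submodule.inner_starProjection_left_eq_right (𝕜 := ℝ) Ω (d i) u
    rw [Submodule.starProjection_eq_self_iff.2 hu_mem, Submodule.starProjection_apply] at this
    exact this
  -- nonnegativity of ⟪d i, u⟫
  have hdu_nonneg : ∀ i, 0 ≤ ⟪d i, u⟫ := by
    intro i
    have h1 := hcoco i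
    have h2 : (0:ℝ) ≤ ‖v i‖ ^ 2 := sq_nonneg _
    nlinarith [hρp i]
  -- gradient of F
  have hgradF : ∀ z, gradient F z = (1 / (M : ℝ)) • ∑ i, gradient (f i) z := by
    intro z
    have hsum : HasFDerivAt (fun w => ∑ i, f i w)
        (∑ i, fderiv ℝ (f i) z) z :=
      HasFDerivAt.fun_sum fun i _ => ((hf i).differentiableAt).hasFDerivAt
    have hFz : HasFDerivAt F ((1 / (M : ℝ)) • ∑ i, fderiv ℝ (f i) z) z := by
      have := hsum.const_mul (1 / (M : ℝ))
      refine HasFDerivAt.congr_of_eventuallyEq ?_ (Filter.Eventually.of_forall hF)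
      simpa [smul_eq_mul] using this
    have hgz : HasGradientAt F ((1 / (M : ℝ)) • ∑ i, gradient (f i) z) z := by
      rw [hasGradientAt_iff_hasFDerivAt]
      refine hFz.congr_fderiv (Eq.symm ?_)
      rw [map_smul, map_sum]
      congr 1
      refine Finset.sum_congr rfl fun i _ => ?_
      have : HasGradientAt (f i) (gradient (f i) z) z :=
        ((hf i).differentiableAt).hasGradientAt
      exact (hasGradientAt_iff_hasFDerivAt.1 this).fderiv.symm
    exact hgz.gradient
  -- the expected inner product
  have hS : ⟪gradient F x - gradient F y, u⟫ = (1 / (M : ℝ)) * ∑ i, ⟪d i, u⟫ := by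
    rw [hgradF x, hgradF y, ← smul_sub, ← Finset.sum_sub_distrib, real_inner_smul_left,
      sum_inner]
  set S : ℝ := ∑ i, ⟪d i, u⟫ with hSdef
  have hSnonneg : 0 ≤ S := Finset.sum_nonneg fun i _ => hdu_nonneg i
  have hconv' : ρm * ‖u‖ ^ 2 ≤ (1 / (M : ℝ)) * S := by rw [← hS]; exact hconv
  -- α bounds
  have hαge : ∀ i, ρp i / (M * p i) ≤ α := by
    intro i
    rw [hα]
    exact le_ciSup (f := fun j => ρp j / (M * p j))
      (Set.Finite.bddAbove (Set.finite_range _)) i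
  have i0 : Fin M := ⟨0, Nat.pos_of_ne_zero (NeZero.ne M)⟩
  have hαpos : 0 < α :=
    lt_of_lt_of_le (div_pos (hρp i0) (mul_pos hM (hp i0))) (hαge i0)
  -- second moment bound
  have hkey : ∑ i, p i * ‖u - c i • v i‖ ^ 2 ≤ (1 - (2 - γ * α) * (γ * ρm)) * ‖u‖ ^ 2 := by
    have hterm : ∀ i, p i * ‖u - c i • v i‖ ^ 2
        = p i * ‖u‖ ^ 2 - 2 * (γ / M) * ⟪d i, u⟫ + (γ ^ 2 / (M ^ 2 * p i)) * ‖v i‖ ^ 2 := by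
      intro i
      have hexp : ‖u - c i • v i‖ ^ 2
          = ‖u‖ ^ 2 - 2 * (c i * ⟪v i, u⟫) + c i ^ 2 * ‖v i‖ ^ 2 := by
        rw [norm_sub_sq_real, real_inner_smul_right, norm_smul]
        rw [real_inner_comm]
        have : ‖c i‖ = c i := abs_of_pos (div_pos hγ (mul_pos hM (hp i)))
        rw [mul_pow, this]
      rw [hexp, hvu i]
      have hpi := (hp i).ne'
      have hMne := hM.ne'
      simp only [hc]
      field_simp
    rw [Finset.sum_congr rfl fun i _ => hterm i]
    rw [Finset.sum_add_distrib, Finset.sum_sub_distrib, ← Finset.sum_mul, hpsum, one_mul,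
      ← Finset.mul_sum]
    have hquad : ∑ i, (γ ^ 2 / (M ^ 2 * p i)) * ‖v i‖ ^ 2 ≤ (γ ^ 2 * α / M) * S := by
      rw [hSdef, Finset.mul_sum]
      refine Finset.sum_le_sum fun i _ => ?_
      have h1 : (γ ^ 2 / (M ^ 2 * p i)) * ‖v i‖ ^ 2
          ≤ (γ ^ 2 / (M ^ 2 * p i)) * (ρp i * ⟪d i, u⟫) := by
        have hpi := hp i
        apply mul_le_mul_of_nonneg_left (hcoco i)
        positivity
      refine h1.trans ?_
      have h2 : (γ ^ 2 / (M ^ 2 * p i)) * (ρp i * ⟪d i, u⟫)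
          = (γ ^ 2 / M) * ((ρp i / (M * p i)) * ⟪d i, u⟫) := by
        field_simp
      rw [h2]
      have h3 : (ρp i / (M * p i)) * ⟪d i, u⟫ ≤ α * ⟪d i, u⟫ :=
        mul_le_mul_of_nonneg_right (hαge i) (hdu_nonneg i)
      calc (γ ^ 2 / M) * ((ρp i / (M * p i)) * ⟪d i, u⟫)
          ≤ (γ ^ 2 / M) * (α * ⟪d i, u⟫) := by
            apply mul_le_mul_of_nonneg_left h3; positivity
        _ = γ ^ 2 * α / M * ⟪d i, u⟫ := by ring
    calc ‖u‖ ^ 2 - 2 * (γ / M) * S + ∑ i, (γ ^ 2 / (M ^ 2 * p i)) * ‖v i‖ ^ 2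
        ≤ ‖u‖ ^ 2 - 2 * (γ / M) * S + (γ ^ 2 * α / M) * S := by linarith [hquad]
      _ = ‖u‖ ^ 2 - (2 * γ - γ ^ 2 * α) * ((1 / M) * S) := by field_simp; ring
      _ ≤ ‖u‖ ^ 2 - (2 * γ - γ ^ 2 * α) * (ρm * ‖u‖ ^ 2) := by
          apply sub_le_sub_left
          apply mul_le_mul_of_nonneg_left hconv'
          nlinarith
      _ = (1 - (2 - γ * α) * (γ * ρm)) * ‖u‖ ^ 2 := by ring
  -- Cauchy–Schwarz / Jensen step
  have hcs : (∑ i, p i * ‖u - c i • v i‖) ^ 2 ≤ ∑ i, p i * ‖u - c i • v i‖ ^ 2 := by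
    have := Finset.sum_sq_le_sum_mul_sum_of_sq_eq_mul Finset.univ
      (r := fun i => p i * ‖u - c i • v i‖) (f := fun i => p i)
      (g := fun i => p i * ‖u - c i • v i‖ ^ 2)
      (fun i _ => (hp i).le)
      (fun i _ => mul_nonneg (hp i).le (sq_nonneg _))
      (fun i _ => by ring)
    rwa [hpsum, one_mul] at this
  have hLHSnn : 0 ≤ ∑ i, p i * ‖u - c i • v i‖ :=
    Finset.sum_nonneg fun i _ => mul_nonneg (hp i).le (norm_nonneg _)
  have hfinal : (∑ i, p i * ‖u - c i • v i‖) ^ 2 ≤ (1 - (2 - γ * α) * (γ * ρm)) * ‖u‖ ^ 2 :=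
    hcs.trans hkey
  calc ∑ i, p i * ‖u - c i • v i‖
      = Real.sqrt ((∑ i, p i * ‖u - c i • v i‖) ^ 2) := (Real.sqrt_sq hLHSnn).symm
    _ ≤ Real.sqrt ((1 - (2 - γ * α) * (γ * ρm)) * ‖u‖ ^ 2) := Real.sqrt_le_sqrt hfinal
    _ = Real.sqrt (1 - (2 - γ * α) * (γ * ρm)) * ‖u‖ := by
        rw [Real.sqrt_mul' _ (sq_nonneg _), Real.sqrt_sq (norm_nonneg _)]
end

section
/- Let θ : ℝ^{n1×n2×n3} → ℝ^m be a linear map satisfying the tRIP with constant δ_{3r} ∈ (0,1). Let Ω be the linear span of three tensors each belonging to T_r, and let P_Ω denote the orthogonal projection onto Ω. Then for every X ∈ Ω, ‖X − P_Ω(θ*(θ(X)))‖ ≤ δ_{3r}·‖X‖, where θ* is the adjoint of θ. -/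
open scoped RealInnerProductSpace

noncomputable section

lemma tProd_apply {n1 n2 n4 n3 : ℕ} (A : Tensor n1 n2 n3) (B : Tensor n2 n4 n3)
    (i : Fin n1) (j : Fin n4) (l : Fin n3) :
    tProd A B (i, j, l) = ∑ qk : Fin n3 × Fin n2, A (i, qk.2, l - qk.1) * B (qk.2, j, qk.1) := by
  simp [tProd, Matrix.mul_apply, bcirc, unfold]

def hcat {n1 r1 r2 n3 : ℕ} (A : Tensor n1 r1 n3) (B : Tensor n1 r2 n3) : Tensor n1 (r1 + r2) n3 :=
  WithLp.toLp 2 (fun x : Fin n1 × Fin (r1 + r2) × Fin n3 => Sum.elim (fun k => A (x.1, k, x.2.2)) (fun k => B (x.1, k, x.2.2))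
    (finSumFinEquiv.symm x.2.1))

def vcat {r1 r2 n2 n3 : ℕ} (A : Tensor r1 n2 n3) (B : Tensor r2 n2 n3) : Tensor (r1 + r2) n2 n3 :=
  WithLp.toLp 2 (fun x : Fin (r1 + r2) × Fin n2 × Fin n3 => Sum.elim (fun k => A (k, x.2)) (fun k => B (k, x.2)) (finSumFinEquiv.symm x.1))

lemma tProd_cat {n1 n2 n3 r1 r2 : ℕ} (A1 : Tensor n1 r1 n3) (A2 : Tensor r1 n2 n3)
    (B1 : Tensor n1 r2 n3) (B2 : Tensor r2 n2 n3) :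
    tProd (hcat A1 B1) (vcat A2 B2) = tProd A1 A2 + tProd B1 B2 := by
  ext ijl
  obtain ⟨i, j, l⟩ := ijl
  have : (tProd A1 A2 + tProd B1 B2) (i, j, l) = tProd A1 A2 (i,j,l) + tProd B1 B2 (i,j,l) := rfl
  rw [this, tProd_apply, tProd_apply, tProd_apply]
  rw [Fintype.sum_prod_type, Fintype.sum_prod_type, Fintype.sum_prod_type, ← Finset.sum_add_distrib]
  refine Finset.sum_congr rfl fun q _ => ?_
  rw [← Equiv.sum_comp (finSumFinEquiv (m := r1) (n := r2)), Fintype.sum_sum_type]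
  simp [hcat, vcat]

lemma add_mem_Tset {n1 n2 n3 r1 r2 : ℕ} {X Y : Tensor n1 n2 n3}
    (hX : X ∈ Tset n1 n2 n3 r1) (hY : Y ∈ Tset n1 n2 n3 r2) :
    X + Y ∈ Tset n1 n2 n3 (r1 + r2) := by
  obtain ⟨A1, A2, rfl⟩ := hX
  obtain ⟨B1, B2, rfl⟩ := hY
  exact ⟨hcat A1 B1, vcat A2 B2, (tProd_cat A1 A2 B1 B2).symm⟩

lemma smul_mem_Tset {n1 n2 n3 r : ℕ} {X : Tensor n1 n2 n3} (c : ℝ)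
    (hX : X ∈ Tset n1 n2 n3 r) : c • X ∈ Tset n1 n2 n3 r := by
  obtain ⟨A1, A2, rfl⟩ := hX
  refine ⟨c • A1, A2, ?_⟩
  ext ijl
  obtain ⟨i, j, l⟩ := ijl
  have : (c • tProd A1 A2) (i,j,l) = c * tProd A1 A2 (i,j,l) := rfl
  rw [this, tProd_apply, tProd_apply, Finset.mul_sum]
  refine Finset.sum_congr rfl fun qk _ => ?_
  have : (c • A1) (i, qk.2, l - qk.1) = c * A1 (i, qk.2, l - qk.1) := rfl
  rw [this]; ring

set_option maxHeartbeats 1000000 in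
/-- Operator-norm bound `‖I − A_Ω* A_Ω‖ ≤ δ_{3r}` from the proof of Theorem 4.3: if `θ`
satisfies the tRIP with constant `δ_{3r}` and `Ω` is the span of three tensors of `T_r`,
then `‖X − P_Ω(θ*(θ X))‖ ≤ δ_{3r}‖X‖` for every `X ∈ Ω`. -/
theorem stmt11 {n1 n2 n3 m r : ℕ}
    (θ : Tensor n1 n2 n3 →ₗ[ℝ] EuclideanSpace ℝ (Fin m)) (δ : ℝ)
    (hδ0 : 0 < δ) (hδ1 : δ < 1)
    (htRIP : ∀ X ∈ Tset n1 n2 n3 (3 * r),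
      (1 - δ) * ‖X‖ ^ 2 ≤ ‖θ X‖ ^ 2 ∧ ‖θ X‖ ^ 2 ≤ (1 + δ) * ‖X‖ ^ 2)
    (A B C : Tensor n1 n2 n3) (hA : A ∈ Tset n1 n2 n3 r) (hB : B ∈ Tset n1 n2 n3 r)
    (hC : C ∈ Tset n1 n2 n3 r) :
    ∀ X ∈ Submodule.span ℝ {A, B, C},
      ‖X - (Submodule.orthogonalProjectionOnto (Submodule.span ℝ {A, B, C})
          (LinearMap.adjoint θ (θ X)) : Tensor n1 n2 n3)‖ ≤ δ * ‖X‖ := by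
  set K := Submodule.span ℝ ({A, B, C} : Set (Tensor n1 n2 n3)) with hK
  -- every element of the span is in T_{3r}
  have hTK : ∀ Z ∈ K, Z ∈ Tset n1 n2 n3 (3 * r) := by
    intro Z hZ
    rw [hK, Submodule.mem_span_insert] at hZ
    obtain ⟨a, z, hz, rfl⟩ := hZ
    rw [Submodule.mem_span_insert] at hz
    obtain ⟨b, w, hw, rfl⟩ := hz
    rw [Submodule.mem_span_singleton] at hw
    obtain ⟨c, rfl⟩ := hw
    rw [show 3 * r = r + (r + r) by ring]
    exact add_mem_Tset (smul_mem_Tset a hA)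
      (add_mem_Tset (smul_mem_Tset b hB) (smul_mem_Tset c hC))
  -- quadratic-form bound
  have hQ : ∀ Z ∈ K, |‖θ Z‖ ^ 2 - ‖Z‖ ^ 2| ≤ δ * ‖Z‖ ^ 2 := by
    intro Z hZ
    obtain ⟨h1, h2⟩ := htRIP Z (hTK Z hZ)
    rw [abs_le]; constructor <;> nlinarith
  -- inner-product bound
  have hIP : ∀ X ∈ K, ∀ Y ∈ K, |⟪θ X, θ Y⟫ - ⟪X, Y⟫| ≤ δ * (‖X‖ * ‖Y‖) := by
    intro X hX Y hY
    rcases eq_or_ne X 0 with rfl | hX0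
    · simp
    rcases eq_or_ne Y 0 with rfl | hY0
    · simp
    have hxn : (0:ℝ) < ‖X‖ := norm_pos_iff.mpr hX0
    have hyn : (0:ℝ) < ‖Y‖ := norm_pos_iff.mpr hY0
    set X' : Tensor n1 n2 n3 := ‖X‖⁻¹ • X with hX'
    set Y' : Tensor n1 n2 n3 := ‖Y‖⁻¹ • Y with hY'
    have hX'K : X' ∈ K := K.smul_mem _ hX
    have hY'K : Y' ∈ K := K.smul_mem _ hY
    have hX'1 : ‖X'‖ = 1 := norm_smul_inv_norm hX0
    have hY'1 : ‖Y'‖ = 1 := norm_smul_inv_norm hY0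
    -- polarization
    have e1 : ‖θ (X' + Y')‖ ^ 2 = ‖θ X'‖ ^ 2 + 2 * ⟪θ X', θ Y'⟫ + ‖θ Y'‖ ^ 2 := by
      rw [map_add]; exact norm_add_sq_real _ _
    have e2 : ‖θ (X' - Y')‖ ^ 2 = ‖θ X'‖ ^ 2 - 2 * ⟪θ X', θ Y'⟫ + ‖θ Y'‖ ^ 2 := by
      rw [map_sub]; exact norm_sub_sq_real _ _
    have e3 : ‖X' + Y'‖ ^ 2 = ‖X'‖ ^ 2 + 2 * ⟪X', Y'⟫ + ‖Y'‖ ^ 2 := norm_add_sq_real _ _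
    have e4 : ‖X' - Y'‖ ^ 2 = ‖X'‖ ^ 2 - 2 * ⟪X', Y'⟫ + ‖Y'‖ ^ 2 := norm_sub_sq_real _ _
    have h1 := hQ (X' + Y') (K.add_mem hX'K hY'K)
    have h2 := hQ (X' - Y') (K.sub_mem hX'K hY'K)
    rw [abs_le] at h1 h2
    have hs : ‖X' + Y'‖ ^ 2 + ‖X' - Y'‖ ^ 2 = 4 := by
      rw [e3, e4, hX'1, hY'1]; ring
    have hprod : δ * ‖X' + Y'‖ ^ 2 + δ * ‖X' - Y'‖ ^ 2 = 4 * δ := by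
      rw [← mul_add, hs]; ring
    have hmain : |⟪θ X', θ Y'⟫ - ⟪X', Y'⟫| ≤ δ := by
      rw [abs_le]
      constructor
      · linarith [h1.1, h2.2, e1, e2, e3, e4]
      · linarith [h1.2, h2.1, e1, e2, e3, e4]
    -- rescale
    have e5 : ⟪θ X', θ Y'⟫ = ‖X‖⁻¹ * (‖Y‖⁻¹ * ⟪θ X, θ Y⟫) := by
      rw [hX', hY', map_smul, map_smul, real_inner_smul_left, real_inner_smul_right]
    have e6 : ⟪X', Y'⟫ = ‖X‖⁻¹ * (‖Y‖⁻¹ * ⟪X, Y⟫) := by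
      rw [hX', hY', real_inner_smul_left, real_inner_smul_right]
    have e7 : ⟪θ X', θ Y'⟫ - ⟪X', Y'⟫ = ‖X‖⁻¹ * ‖Y‖⁻¹ * (⟪θ X, θ Y⟫ - ⟪X, Y⟫) := by
      rw [e5, e6]; ring
    have e8 : |⟪θ X', θ Y'⟫ - ⟪X', Y'⟫| = (‖X‖ * ‖Y‖)⁻¹ * |⟪θ X, θ Y⟫ - ⟪X, Y⟫| := by
      rw [e7, abs_mul, mul_inv, abs_mul, abs_inv, abs_inv, abs_of_pos hxn, abs_of_pos hyn]
    rw [e8] at hmain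
    calc |⟪θ X, θ Y⟫ - ⟪X, Y⟫|
        = (‖X‖ * ‖Y‖) * ((‖X‖ * ‖Y‖)⁻¹ * |⟪θ X, θ Y⟫ - ⟪X, Y⟫|) := by
          field_simp
      _ ≤ (‖X‖ * ‖Y‖) * δ := by
          apply mul_le_mul_of_nonneg_left hmain (by positivity)
      _ = δ * (‖X‖ * ‖Y‖) := by ring
  -- conclude
  intro X hX
  set P : Tensor n1 n2 n3 := (Submodule.orthogonalProjectionOnto K (LinearMap.adjoint θ (θ X)) : Tensor n1 n2 n3)
    with hP
  set Y : Tensor n1 n2 n3 := X - P with hY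
  have hYK : Y ∈ K := K.sub_mem hX (Submodule.orthogonalProjectionOnto K (LinearMap.adjoint θ (θ X))).2
  have hperp : ⟪LinearMap.adjoint θ (θ X) - P, Y⟫ = 0 :=
    Submodule.starProjection_inner_eq_zero _ Y hYK
  have hnorm : ‖Y‖ ^ 2 = ⟪X, Y⟫ - ⟪θ X, θ Y⟫ := by
    have h0 : ‖Y‖ ^ 2 = ⟪Y, Y⟫ := (real_inner_self_eq_norm_sq Y).symm
    have h1 : ⟪Y, Y⟫ = ⟪X - P, Y⟫ := by rw [hY]
    have h2 : ⟪X - P, Y⟫ = ⟪X - LinearMap.adjoint θ (θ X), Y⟫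
        + ⟪LinearMap.adjoint θ (θ X) - P, Y⟫ := by
      rw [← inner_add_left]; congr 1; abel
    have h3 : ⟪X - LinearMap.adjoint θ (θ X), Y⟫ = ⟪X, Y⟫ - ⟪θ X, θ Y⟫ := by
      rw [inner_sub_left, LinearMap.adjoint_inner_left]
    rw [h0, h1, h2, h3, hperp, add_zero]
  have hb : ‖Y‖ ^ 2 ≤ δ * (‖X‖ * ‖Y‖) := by
    calc ‖Y‖ ^ 2 = ⟪X, Y⟫ - ⟪θ X, θ Y⟫ := hnorm
      _ ≤ |⟪X, Y⟫ - ⟪θ X, θ Y⟫| := le_abs_self _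
      _ = |⟪θ X, θ Y⟫ - ⟪X, Y⟫| := abs_sub_comm _ _
      _ ≤ δ * (‖X‖ * ‖Y‖) := hIP X hX Y hYK
  rcases eq_or_lt_of_le (norm_nonneg Y) with h | h
  · rw [← h]; positivity
  · nlinarith


end
end
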